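/- Let A be an n×r real matrix (n > r) of full column rank. If A_◇ is an r×r submatrix of A with maximal |det|, then A_◇ is dominant, i.e., every entry of A·A_◇^{-1} has absolute value at most 1. -/

import Mathlib

open Matrix BigOperators Filter

noncomputable def sval {m n : ℕ} (A : Matrix (Fin m) (Fin n) ℝ) (k : Fin n) : ℝ :=
  Real.sqrt ((Matrix.isHermitian_iff_isSymm.mpr (by rw [Matrix.IsSymm, Matrix.transpose_mul, Matrix.transpose_transpose]) : (Aᵀ * A).IsHermitian).eigenvalues
    (Tuple.sort (Matrix.isHermitian_iff_isSymm.mpr (by rw [Matrix.IsSymm, Matrix.transpose_mul, Matrix.transpose_transpose]) : (Aᵀ * A).IsHermitian).eigenvalues (Fin.rev k)))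

noncomputable def chebNorm {m n : ℕ} (A : Matrix (Fin m) (Fin n) ℝ) : ℝ :=
  ⨆ i, ⨆ j, |A i j|

noncomputable def frobNorm {m n : ℕ} (A : Matrix (Fin m) (Fin n) ℝ) : ℝ :=
  Real.sqrt (∑ i, ∑ j, (A i j) ^ 2)

/-!
By Cramer's rule, the `(i, p)` entry of `A * A_◇⁻¹` is `det A' / det A_◇`, where `A'`
is `A_◇` with its `p`-th row replaced by the `i`-th row of `A`. But `A'` is again an `r × r`
submatrix of `A` formed from rows (if a row repeats, `det A' = 0`), so maximality of `|det A_◇|`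
bounds the quotient by `1`.
-/

namespace Matrix

variable {m n K : Type*} [DecidableEq n]

/-- For singular `B` both sides are `0`, since then `B⁻¹ = 0` and `x / 0 = 0`. -/
theorem vecMul_inv_apply [Fintype n] [Field K] (B : Matrix n n K) (v : n → K) (p : n) :
    (v ᵥ* B⁻¹) p = (B.updateRow p v).det / B.det := by
  rw [inv_def, Ring.inverse_eq_inv', vecMul_smul, Pi.smul_apply, smul_eq_mul,
    ← mulVec_transpose, adjugate_transpose, ← cramer_eq_adjugate_mulVec,
    cramer_transpose_apply, inv_mul_eq_div]

theorem det_submatrix_eq_zero_of_not_injective [Fintype n] [CommRing K] (A : Matrix m n K)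
    {I : n → m} (hI : ¬Function.Injective I) (f : n → n) : (A.submatrix I f).det = 0 := by
  obtain ⟨a, b, hab, hne⟩ := Function.not_injective_iff.mp hI
  exact det_zero_of_row_eq hne (by ext j; simp [hab])

theorem updateRow_submatrix_eq_submatrix_update {α : Type*} [DecidableEq m] (A : Matrix m n α)
    (I : n → m) (f : n → n) (p : n) (i : m) :
    (A.submatrix I f).updateRow p (A i ∘ f) = A.submatrix (Function.update I p i) f := by
  ext q j
  by_cases hq : q = p
  · subst hq
    simp
  · simp [hq]

theorem abs_mul_inv_submatrix_apply_le_one [Fintype n] [DecidableEq m] [Field K] [LinearOrder K]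
    [IsStrictOrderedRing K] (A : Matrix m n K) (I : n → m)
    (hmax : ∀ I' : n → m, |(A.submatrix I' id).det| ≤ |(A.submatrix I id).det|) (i : m) (p : n) :
    |(A * (A.submatrix I id)⁻¹) i p| ≤ 1 := by
  rw [mul_apply_eq_vecMul, vecMul_inv_apply, ← Function.comp_id (A i),
    updateRow_submatrix_eq_submatrix_update, abs_div]
  exact div_le_one_of_le₀ (hmax _) (abs_nonneg _)

end Matrix

theorem stmt12_general {n r : ℕ} (A : Matrix (Fin n) (Fin r) ℝ)
    (Imax : Fin r → Fin n)
    (hmax : ∀ I' : Fin r → Fin n, Function.Injective I' →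
      |(A.submatrix I' id).det| ≤ |(A.submatrix Imax id).det|) :
    ∀ (i : Fin n) (p : Fin r), |(A * (A.submatrix Imax id)⁻¹) i p| ≤ 1 := by
  refine A.abs_mul_inv_submatrix_apply_le_one Imax fun I' => ?_
  by_cases hI' : Function.Injective I'
  · exact hmax I' hI'
  · rw [A.det_submatrix_eq_zero_of_not_injective hI', abs_zero]
    exact abs_nonneg _

theorem stmt12 {n r : ℕ} (hr : r < n) (A : Matrix (Fin n) (Fin r) ℝ)
    (hrank : A.rank = r) (Imax : Fin r → Fin n) (hImax : Function.Injective Imax)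
    (hmax : ∀ I' : Fin r → Fin n, Function.Injective I' →
      |(A.submatrix I' id).det| ≤ |(A.submatrix Imax id).det|) :
    ∀ (i : Fin n) (p : Fin r), |(A * (A.submatrix Imax id)⁻¹) i p| ≤ 1 :=
  stmt12_general A Imax hmax
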